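/- Let X be an affine algebraic group over a valued field k, and let B, B' be two nonempty subsets of X(k̄). Then the product set BB' = {bb' : b ∈ B, b' ∈ B'} is bounded if and only if both B and B' are bounded. -/
import Mathlib


open scoped Pointwise

open scoped MatrixGroups

/-- A subset `B` of `GL_n(k̄)` is bounded for a valuation `ω` if the valuations of the
matrix entries of the elements of `B` and of their inverses are uniformly bounded below
(this is equivalent to the coordinate-ring definition, since the coordinate ring of
`GL_n`, and hence of any closed subgroup, is generated by the matrix entries together
with the inverse of the determinant). -/
def IsBoundedMatrixSet {n : ℕ} {K : Type*} [Field K]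
    (ω : K → WithTop ℝ) (B : Set (GL (Fin n) K)) : Prop :=
  ∃ m : ℝ, ∀ g ∈ B, ∀ i j : Fin n,
    ((m : ℝ) : WithTop ℝ) ≤ ω ((g : Matrix (Fin n) (Fin n) K) i j) ∧
      ((m : ℝ) : WithTop ℝ) ≤ ω (((g⁻¹ : GL (Fin n) K) : Matrix (Fin n) (Fin n) K) i j)

/-- Any finite set of `WithTop ℝ` has a real lower bound. -/
lemma exists_real_lb (s : Finset (WithTop ℝ)) : ∃ m : ℝ, ∀ x ∈ s, (m : WithTop ℝ) ≤ x := by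
  classical
  induction s using Finset.induction_on with
  | empty => exact ⟨0, fun x hx => absurd hx (Finset.notMem_empty x)⟩
  | @insert a s ha ih =>
    obtain ⟨m, hm⟩ := ih
    cases a with
    | top =>
      exact ⟨m, fun x hx => by
        rcases Finset.mem_insert.mp hx with rfl | hx
        · exact le_top
        · exact hm x hx⟩
    | coe r =>
      refine ⟨min m r, fun x hx => ?_⟩
      rcases Finset.mem_insert.mp hx with rfl | hx
      · exact_mod_cast (min_le_right m r : min m r ≤ r)
      · exact le_trans (by exact_mod_cast min_le_left m r) (hm x hx)

lemma omega_sum {K : Type*} [Field K] (ω : K → WithTop ℝ)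
    (hω0 : ω 0 = ⊤) (hωadd : ∀ x y : K, min (ω x) (ω y) ≤ ω (x + y))
    {ι : Type*} (s : Finset ι) (f : ι → K) (c : WithTop ℝ)
    (h : ∀ i ∈ s, c ≤ ω (f i)) : c ≤ ω (∑ i ∈ s, f i) := by
  classical
  induction s using Finset.induction_on with
  | empty => simp [hω0]
  | @insert a s ha ih =>
    rw [Finset.sum_insert ha]
    refine le_trans ?_ (hωadd _ _)
    exact le_min (h a (Finset.mem_insert_self a _))
      (ih fun i hi => h i (Finset.mem_insert_of_mem hi))

lemma isBounded_mono {n : ℕ} {K : Type*} [Field K] (ω : K → WithTop ℝ)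
    {S T : Set (GL (Fin n) K)} (hST : S ⊆ T)
    (hT : IsBoundedMatrixSet ω T) : IsBoundedMatrixSet ω S := by
  obtain ⟨m, hm⟩ := hT
  exact ⟨m, fun g hg => hm g (hST hg)⟩

lemma isBounded_singleton {n : ℕ} {K : Type*} [Field K] (ω : K → WithTop ℝ)
    (g : GL (Fin n) K) : IsBoundedMatrixSet ω {g} := by
  classical
  obtain ⟨m, hm⟩ := exists_real_lb
    ((Finset.univ.image fun p : Fin n × Fin n =>
        ω ((g : Matrix (Fin n) (Fin n) K) p.1 p.2)) ∪
     (Finset.univ.image fun p : Fin n × Fin n =>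
        ω (((g⁻¹ : GL (Fin n) K) : Matrix (Fin n) (Fin n) K) p.1 p.2)))
  refine ⟨m, fun h hh i j => ?_⟩
  rcases Set.mem_singleton_iff.mp hh with rfl
  constructor
  · exact hm _ (Finset.mem_union_left _ (Finset.mem_image.mpr ⟨(i, j), Finset.mem_univ _, rfl⟩))
  · exact hm _ (Finset.mem_union_right _ (Finset.mem_image.mpr ⟨(i, j), Finset.mem_univ _, rfl⟩))

lemma isBoundedMatrixSet_mul {n : ℕ} {K : Type*} [Field K] (ω : K → WithTop ℝ)
    (hω0 : ω 0 = ⊤)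
    (hωmul : ∀ x y : K, ω (x * y) = ω x + ω y)
    (hωadd : ∀ x y : K, min (ω x) (ω y) ≤ ω (x + y))
    {S T : Set (GL (Fin n) K)}
    (hS : IsBoundedMatrixSet ω S) (hT : IsBoundedMatrixSet ω T) :
    IsBoundedMatrixSet ω (S * T) := by
  obtain ⟨m₁, hm₁⟩ := hS
  obtain ⟨m₂, hm₂⟩ := hT
  refine ⟨m₁ + m₂, ?_⟩
  rintro g hg i j
  rw [Set.mem_mul] at hg
  obtain ⟨a, ha, b, hb, rfl⟩ := hg
  have key : ∀ (c d : ℝ) (x y : GL (Fin n) K),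
      (∀ i j, (c : WithTop ℝ) ≤ ω ((x : Matrix (Fin n) (Fin n) K) i j)) →
      (∀ i j, (d : WithTop ℝ) ≤ ω ((y : Matrix (Fin n) (Fin n) K) i j)) →
      ∀ i j, ((c + d : ℝ) : WithTop ℝ) ≤
        ω (((x * y : GL (Fin n) K) : Matrix (Fin n) (Fin n) K) i j) := by
    intro c d x y hx hy i j
    have : ((x * y : GL (Fin n) K) : Matrix (Fin n) (Fin n) K) i j
        = ∑ l, (x : Matrix (Fin n) (Fin n) K) i l * (y : Matrix (Fin n) (Fin n) K) l j := by
      simp [Units.val_mul, Matrix.mul_apply]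
    rw [this]
    refine omega_sum ω hω0 hωadd _ _ _ fun l _ => ?_
    rw [hωmul]
    push_cast
    exact add_le_add (hx i l) (hy l j)
  constructor
  · exact key m₁ m₂ a b (fun i j => (hm₁ a ha i j).1) (fun i j => (hm₂ b hb i j).1) i j
  · have : ((a * b)⁻¹ : GL (Fin n) K) = b⁻¹ * a⁻¹ := mul_inv_rev a b
    rw [this]
    have := key m₂ m₁ b⁻¹ a⁻¹ (fun i j => (hm₂ b hb i j).2) (fun i j => (hm₁ a ha i j).2) i j
    rwa [add_comm m₂ m₁] at this

/-- Let `X` be an affine algebraic group over a valued field `k`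
(realized as a closed subgroup `G` of some `GL_n` over an algebraic closure `k̄ = K`),
and let `B, B'` be two nonempty subsets of `X(k̄)`.  Then the product set
`B * B' = {b b' : b ∈ B, b' ∈ B'}` is bounded if and only if both `B` and `B'` are
bounded. -/
theorem bounded_product_iff
    {K : Type*} [Field K] [IsAlgClosed K] {n : ℕ}
    (ω : K → WithTop ℝ)
    (hω0 : ω 0 = ⊤) (hω1 : ω 1 = 0)
    (hωmul : ∀ x y : K, ω (x * y) = ω x + ω y)
    (hωadd : ∀ x y : K, min (ω x) (ω y) ≤ ω (x + y))
    (G : Subgroup (GL (Fin n) K))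
    (B B' : Set (GL (Fin n) K))
    (hBG : B ⊆ (G : Set (GL (Fin n) K))) (hB'G : B' ⊆ (G : Set (GL (Fin n) K)))
    (hB : B.Nonempty) (hB' : B'.Nonempty) :
    IsBoundedMatrixSet ω (B * B') ↔
      IsBoundedMatrixSet ω B ∧ IsBoundedMatrixSet ω B' := by
  constructor
  · intro hP
    obtain ⟨b₀, hb₀⟩ := hB
    obtain ⟨b'₀, hb'₀⟩ := hB'
    constructor
    · refine isBounded_mono ω (T := (B * B') * {b'₀⁻¹}) ?_
        (isBoundedMatrixSet_mul ω hω0 hωmul hωadd hP (isBounded_singleton ω _))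
      intro g hg
      exact ⟨g * b'₀, Set.mul_mem_mul hg hb'₀, b'₀⁻¹, rfl, by group⟩
    · refine isBounded_mono ω (T := {b₀⁻¹} * (B * B')) ?_
        (isBoundedMatrixSet_mul ω hω0 hωmul hωadd (isBounded_singleton ω _) hP)
      intro g hg
      exact ⟨b₀⁻¹, rfl, b₀ * g, Set.mul_mem_mul hb₀ hg, by group⟩
  · rintro ⟨h1, h2⟩
    exact isBoundedMatrixSet_mul ω hω0 hωmul hωadd h1 h2
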